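/- arXiv:1906.09004 — 3 statements merged into one kernel-verified Lean document; each statement's English description precedes it below -/
import Mathlib

section
/- Let M_0, M_1, ..., M_J be real numbers (measure values) and let α ∈ (0,1). Define M_(α) as the largest value among {M_0,...,M_J} such that #{j : M_j < M_(α)} ≤ α(J+1), and let I_α = {j : M_j ≥ M_(α)}. Define the Monte Carlo p-value p = (1/(J+1)) · #{j : M_j ≤ M_0}. Then p ≤ α if and only if 0 ∉ I_α, provided there are no ties among the M_j. -/
/-!
The p-value is at most `α` iff at most `α (J+1)` of the values are `≤ M 0`. If that holds while
`M 0 ≥ M_(α)`, then `M 0` is not the largest value (as `α < 1`), and the next value above `M 0`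
has exactly the values `≤ M 0` below it; maximality of `M_(α)` then puts that value below
`M_(α) ≤ M 0`, which is absurd. Conversely, if `M 0 < M_(α)`, the values `≤ M 0` lie among the
at most `α (J+1)` values below `M_(α)`.
-/

open Finset

section CriticalValue

variable {ι β : Type*} [Fintype ι] [LinearOrder β]

-- The witness is the least value of `f` above `x`.
theorem exists_lt_filter_lt_eq_filter_le (f : ι → β) {x : β} (h : ∃ j, x < f j) :
    ∃ j, x < f j ∧ univ.filter (fun i => f i < f j) = univ.filter (fun i => f i ≤ x) := by
  obtain ⟨j, hj, hmin⟩ := exists_min_image (univ.filter fun i => x < f i) f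
    (by simpa [Finset.Nonempty] using h)
  simp only [mem_filter, mem_univ, true_and] at hj hmin
  refine ⟨j, hj, ?_⟩
  ext i
  simp only [mem_filter, mem_univ, true_and]
  exact ⟨fun hi => not_lt.mp fun hxi => (hmin i hxi).not_gt hi, fun hi => hi.trans_lt hj⟩

theorem card_filter_le_le_iff_lt (f : ι → β) {t : ℝ} (ht : t < Fintype.card ι) {m : β}
    (hcard : ((univ.filter fun i => f i < m).card : ℝ) ≤ t)
    (hmax : ∀ j, ((univ.filter fun i => f i < f j).card : ℝ) ≤ t → f j ≤ m) (x : β) :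
    ((univ.filter fun i => f i ≤ x).card : ℝ) ≤ t ↔ x < m := by
  constructor
  · intro hle
    by_contra! hmx
    by_cases habove : ∃ j, x < f j
    · obtain ⟨j, hxj, hj⟩ := exists_lt_filter_lt_eq_filter_le f habove
      exact (hxj.trans_le ((hmax j (hj ▸ hle)).trans hmx)).false
    · simp only [not_exists, not_lt] at habove
      rw [filter_true_of_mem fun i _ => habove i, card_univ] at hle
      exact hle.not_gt ht
  · intro hxm
    refine le_trans ?_ hcard
    exact_mod_cast card_le_card (monotone_filter_right _ fun i _ (hi : f i ≤ x) => hi.trans_lt hxm)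

end CriticalValue

theorem stmt0_general (J : ℕ) (M : Fin (J + 1) → ℝ)
    (α : ℝ) (hα : α ∈ Set.Ioo (0 : ℝ) 1) (Mα : ℝ)
    (hcard : ((univ.filter (fun j => M j < Mα)).card : ℝ) ≤ α * (J + 1))
    (hmax : ∀ j : Fin (J + 1),
      ((univ.filter (fun j' => M j' < M j)).card : ℝ) ≤ α * (J + 1) → M j ≤ Mα) :
    ((univ.filter (fun j => M j ≤ M 0)).card : ℝ) / (J + 1) ≤ α ↔
      0 ∉ {j : Fin (J + 1) | Mα ≤ M j} := by
  have hlevel : α * (J + 1) < Fintype.card (Fin (J + 1)) := by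
    rw [Fintype.card_fin, Nat.cast_succ]
    exact mul_lt_of_lt_one_left (by positivity) hα.2
  rw [div_le_iff₀ (by positivity), Set.mem_ofPred_eq, not_le]
  exact card_filter_le_le_iff_lt M hlevel hcard hmax (M 0)

/-- Key step of Theorem 1: with distinct measure values `M 0, …, M J`,
`α ∈ (0,1)`, critical value `Mα` (the largest among the `M j` such that
`#{j : M j < Mα} ≤ α (J+1)`), and `Iα = {j : M j ≥ Mα}`, the Monte Carlo p-value
`p = #{j : M j ≤ M 0} / (J+1)` satisfies `p ≤ α ↔ 0 ∉ Iα`. -/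
theorem stmt0 (J : ℕ) (M : Fin (J + 1) → ℝ) (hM : Function.Injective M)
    (α : ℝ) (hα : α ∈ Set.Ioo (0 : ℝ) 1) (Mα : ℝ)
    (hmem : ∃ j, M j = Mα)
    (hcard : ((univ.filter (fun j => M j < Mα)).card : ℝ) ≤ α * (J + 1))
    (hmax : ∀ j : Fin (J + 1),
      ((univ.filter (fun j' => M j' < M j)).card : ℝ) ≤ α * (J + 1) → M j ≤ Mα) :
    ((univ.filter (fun j => M j ≤ M 0)).card : ℝ) / (J + 1) ≤ α ↔
      0 ∉ {j : Fin (J + 1) | Mα ≤ M j} :=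
  stmt0_general J M α hα Mα hcard hmax
end

section
/- The ERL update/comparison procedure based on the k most extreme ranks and their counts is correct as long as ties are broken within the first k distinct rank values: if two augmented measures (R_1,...,R_k, c_1,...,c_k) and (R'_1,...,R'_k, c'_1,...,c'_k) built from sorted rank vectors differ at some position i ≤ k (either R_i ≠ R'_i, or R_i = R'_i and c_i ≠ c'_i, with all earlier positions equal), then the comparison rule of Section 4.3 (smaller R_i more extreme; equal R_i with larger count more extreme) agrees with the reverse lexicographic order ≺ on the full sorted rank vectors. -/
/-- Run-length encoding of a list: the distinct values in order of appearance together
with their multiplicities.  For a nondecreasingly sorted list this lists the distinct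
values in increasing order with their counts; the ERL algorithm records its first `k`
pairs `(R_1, c_1), …, (R_k, c_k)` as the augmented measure. -/
def rle : List ℤ → List (ℤ × ℕ)
  | [] => []
  | a :: l =>
    match rle l with
    | [] => [(a, 1)]
    | (b, c) :: t => if a = b then (b, c + 1) :: t else (a, 1) :: (b, c) :: t

/-- The ERL comparison rule of Section 4.3: `(R, c)` is more extreme than `(R', c')`
iff `R < R'`, or `R = R'` and `c > c'`. -/
def rlt (p q : ℤ × ℕ) : Prop :=
  p.1 < q.1 ∨ (p.1 = q.1 ∧ q.2 < p.2)

/-! A nondecreasing list is a block of copies of its minimum followed by a nondecreasing list of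
strictly larger values, and `rle` records that block as its first pair. Compare the first pairs:
a smaller minimum decides `≺` at once; equal minima with a longer block in `u` means that where
the block of `v` ends, `u` still shows the minimum while `v` already shows a larger value (such a
position exists because the lengths agree); equal pairs reduce the comparison to the tails.
Truncating to `k` pairs is harmless, since a strict lexicographic comparison of prefixes is
inherited by the full lists. -/

theorem List.Lex.of_take {α : Type*} {r : α → α → Prop} :
    ∀ {l₁ l₂ : List α} (k : ℕ), List.Lex r (l₁.take k) (l₂.take k) → List.Lex r l₁ l₂
  | _, _, 0, h => absurd h List.not_lex_nil
  | [], _ :: _, _ + 1, _ => .nil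
  | _ :: _, _ :: _, k + 1, .rel h => .rel h
  | _ :: _, _ :: _, k + 1, .cons h => .cons (of_take k h)
  | [], [], _ + 1, h | _ :: _, [], _ + 1, h => absurd h List.not_lex_nil

theorem rle_head?_map_fst : ∀ l : List ℤ, (rle l).head?.map Prod.fst = l.head?
  | [] => rfl
  | a :: l => by
    have ih := rle_head?_map_fst l
    rw [rle]
    split <;> simp_all
    split_ifs <;> simp_all

theorem rle_replicate_append {a : ℤ} {t : List ℤ} (ht : ∀ b ∈ t.head?, b ≠ a) :
    ∀ {n : ℕ}, 0 < n → rle (List.replicate n a ++ t) = (a, n) :: rle t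
  | 1, _ => by
    have hhead := rle_head?_map_fst t
    rw [List.replicate_one, List.singleton_append, rle]
    rcases hrle : rle t with _ | ⟨⟨b, c⟩, r⟩
    · rfl
    · rw [hrle] at hhead
      exact if_neg (ht b (by simp [← hhead])).symm
  | n + 2, _ => by
    rw [List.replicate_succ, List.cons_append, rle, rle_replicate_append ht n.succ_pos]
    simp

theorem exists_eq_replicate_append_of_pairwise_le {α : Type*} [PartialOrder α] :
    ∀ {a : α} {l : List α}, (a :: l).Pairwise (· ≤ ·) →
      ∃ n t, 0 < n ∧ a :: l = List.replicate n a ++ t ∧ ∀ x ∈ t, a < x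
  | a, [], _ => ⟨1, [], one_pos, rfl, by simp⟩
  | a, b :: l, h => by
    obtain ⟨hab, hbl⟩ := List.pairwise_cons.mp h
    obtain ⟨n, t, hn, hbt, hlt⟩ := exists_eq_replicate_append_of_pairwise_le hbl
    rcases (hab b (by simp)).eq_or_lt with rfl | hab
    · exact ⟨n + 1, t, n.succ_pos, by rw [hbt, List.replicate_succ, List.cons_append], hlt⟩
    · refine ⟨1, b :: l, one_pos, rfl, fun x hx => hab.trans_le ?_⟩
      rcases List.mem_cons.mp hx with rfl | hx
      · exact le_rfl
      · exact List.rel_of_pairwise_cons hbl hx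

theorem List.Lex.replicate_append_of_lt {α : Type*} {r : α → α → Prop} {a b : α} {m n : ℕ}
    (hnm : n < m) (hab : r a b) (s t : List α) :
    List.Lex r (List.replicate m a ++ s) (List.replicate n a ++ b :: t) := by
  obtain ⟨d, rfl⟩ := Nat.exists_eq_add_of_lt hnm
  rw [Nat.add_assoc, List.replicate_add, List.append_assoc, List.replicate_succ, List.cons_append]
  exact List.Lex.append_left _ (.rel hab) _

theorem exists_rle_eq_cons_of_pairwise_le {a : ℤ} {l : List ℤ} (h : (a :: l).Pairwise (· ≤ ·)) :
    ∃ n t, 0 < n ∧ a :: l = List.replicate n a ++ t ∧ rle (a :: l) = (a, n) :: rle t ∧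
      (∀ x ∈ t, a < x) ∧ t.Pairwise (· ≤ ·) := by
  obtain ⟨n, t, hn, hl, ht⟩ := exists_eq_replicate_append_of_pairwise_le h
  refine ⟨n, t, hn, hl, ?_, ht, ?_⟩
  · rw [hl, rle_replicate_append (fun b hb => (ht b (List.mem_of_mem_head? hb)).ne') hn]
  · exact (hl ▸ h).sublist (List.sublist_append_right _ _)

theorem lex_of_lex_rle {u v : List ℤ} (hu : u.Pairwise (· ≤ ·)) (hv : v.Pairwise (· ≤ ·))
    (hlen : u.length = v.length) (h : List.Lex rlt (rle u) (rle v)) :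
    List.Lex (· < ·) u v :=
  match u, v, hu, hv, hlen with
  | [], [], _, _, _ => absurd h List.not_lex_nil
  | a :: u', b :: v', hu, hv, hlen => by
    obtain ⟨m, s, hm, hus, hrs, -, hs⟩ := exists_rle_eq_cons_of_pairwise_le hu
    obtain ⟨n, t, -, hvt, hrt, hbt, ht⟩ := exists_rle_eq_cons_of_pairwise_le hv
    have hu_len : u'.length + 1 = m + s.length := by simpa using congrArg List.length hus
    have hv_len : v'.length + 1 = n + t.length := by simpa using congrArg List.length hvt
    simp only [List.length_cons] at hlen
    rw [hrs, hrt] at h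
    cases h with
    | rel hr =>
      rcases hr with hab | ⟨rfl, hnm⟩
      · exact .rel hab
      · cases t with
        | nil => simp only [List.length_nil] at hv_len; omega
        | cons c t => rw [hus, hvt]; exact .replicate_append_of_lt hnm (hbt c (by simp)) s t
    | cons h =>
      have : s.length < u'.length + 1 := by omega
      rw [hus, hvt]
      exact .append_left _ (lex_of_lex_rle hs ht (by omega) h) _
termination_by u.length

/-- correctness of the truncated ERL comparison.  If the augmented
measures (the first `k` value–count pairs of the run-length encodings of the sorted rank
vectors `u, v`) differ, and the comparison rule of Section 4.3 declares `u` more extreme,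
then `u` precedes `v` in the reverse lexicographic order on the full sorted vectors. -/
theorem stmt15 (k : ℕ) (u v : List ℤ) (hu : u.Pairwise (· ≤ ·)) (hv : v.Pairwise (· ≤ ·))
    (hlen : u.length = v.length)
    (h : List.Lex rlt ((rle u).take k) ((rle v).take k)) :
    List.Lex (· < ·) u v :=
  lex_of_lex_rle hu hv hlen (.of_take k h)
end

section
/- The run-length encoding comparison is equivalent to lexicographic comparison: let u, v be nondecreasing integer sequences of equal length n, with run-length encodings ((R_1,c_1),(R_2,c_2),...) and ((R'_1,c'_1),(R'_2,c'_2),...) listing the distinct values in increasing order with multiplicities. Then u < v lexicographically if and only if at the first index i where (R_i,c_i) ≠ (R'_i,c'_i), either R_i < R'_i, or R_i = R'_i and c_i > c'_i. -/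
/-! The run-length encoding of a sorted list `a^p ++ w` (with every element of `w` above `a`)
is `(a, p) :: rle w`, so comparing heads of encodings compares the first runs. If `u < v` then
either the first values differ, or they agree and the run of `u` is longer, or the first runs
coincide and we recurse; a shorter first run in `u` is impossible, since then `u` would exceed `v`
at the end of that run (equal lengths ensure `u` goes on). This proves `u < v → rle u < rle v`; the converse follows because the
lexicographic order on `List ℤ` is total while that on the encodings is asymmetric. -/

open List

namespace List

variable {α : Type*}

theorem lex_append_left_iff {r : α → α → Prop} [Std.Irrefl r] (l : List α) {s t : List α} :
    Lex r (l ++ s) (l ++ t) ↔ Lex r s t := by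
  induction l with
  | nil => rfl
  | cons a l ih => rw [cons_append, cons_append, lex_cons_iff, ih]

theorem lex_replicate_append_of_lt {r : α → α → Prop} {a c : α} (hac : r a c) {k m : ℕ}
    (hkm : k < m) (s t : List α) :
    Lex r (replicate m a ++ s) (replicate k a ++ c :: t) := by
  obtain ⟨d, rfl⟩ := Nat.exists_eq_add_of_lt hkm
  rw [Nat.add_assoc, replicate_add, append_assoc, replicate_succ, cons_append]
  exact Lex.append_left r (Lex.rel hac) _

theorem head?_ne_some_of_forall_lt [Preorder α] {a : α} {w : List α} (h : ∀ c ∈ w, a < c) :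
    w.head? ≠ some a :=
  fun ha => lt_irrefl a (h a (mem_of_mem_head? ha))

theorem exists_cons_eq_replicate_append [PartialOrder α] {a : α} {l : List α}
    (h : (a :: l).Pairwise (· ≤ ·)) :
    ∃ k w, a :: l = replicate (k + 1) a ++ w ∧ (∀ c ∈ w, a < c) ∧ w.Pairwise (· ≤ ·) := by
  induction l generalizing a with
  | nil => exact ⟨0, [], rfl, by simp, .nil⟩
  | cons b l ih =>
    have hbl := h.of_cons
    rcases (rel_of_pairwise_cons h mem_cons_self).eq_or_lt with rfl | hab
    · obtain ⟨k, w, hw, hgt, hws⟩ := ih hbl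
      exact ⟨k + 1, w, by rw [hw]; rfl, hgt, hws⟩
    · refine ⟨0, b :: l, rfl, fun c hc => ?_, hbl⟩
      rcases mem_cons.1 hc with rfl | hc
      exacts [hab, hab.trans_le (rel_of_pairwise_cons hbl hc)]

end List

theorem exists_rle_cons_eq (a : ℤ) (l : List ℤ) : ∃ c t, rle (a :: l) = (a, c) :: t := by
  rcases h : rle l with _ | ⟨⟨b, c⟩, t⟩
  · exact ⟨1, [], by simp [rle, h]⟩
  · by_cases hab : a = b
    · subst hab; exact ⟨c + 1, t, by simp [rle, h]⟩
    · exact ⟨1, (b, c) :: t, by simp [rle, h, hab]⟩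

theorem rle_cons_of_head?_ne {a : ℤ} {l : List ℤ} (h : l.head? ≠ some a) :
    rle (a :: l) = (a, 1) :: rle l := by
  cases l with
  | nil => rfl
  | cons b l =>
    obtain ⟨c, t, hbl⟩ := exists_rle_cons_eq b l
    have hab : a ≠ b := fun hab => h (by simp [hab])
    rw [rle, hbl]
    simp [hab]

theorem rle_replicate_append_s16 {a : ℤ} {w : List ℤ} (h : w.head? ≠ some a) (k : ℕ) :
    rle (replicate (k + 1) a ++ w) = (a, k + 1) :: rle w := by
  induction k with
  | zero => exact rle_cons_of_head?_ne h
  | succ k ih => rw [replicate_succ, cons_append, rle, ih]; simp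

instance : Std.Asymm rlt where
  asymm p q := by unfold rlt; omega

theorem lex_rle_of_lex {u v : List ℤ} (hu : u.Pairwise (· ≤ ·)) (hv : v.Pairwise (· ≤ ·))
    (hlen : u.length = v.length) (h : Lex (· < ·) u v) : Lex rlt (rle u) (rle v) := by
  induction hn : u.length using Nat.strong_induction_on generalizing u v with
  | _ n ih =>
    rcases v with _ | ⟨b, v'⟩
    · exact absurd h not_lex_nil
    rcases u with _ | ⟨a, u'⟩
    · exact absurd hlen (by simp)
    obtain ⟨p, u₂, hu_eq, hau, hu₂⟩ := exists_cons_eq_replicate_append hu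
    obtain ⟨q, v₂, hv_eq, hbv, hv₂⟩ := exists_cons_eq_replicate_append hv
    rw [hu_eq, hv_eq] at h hlen ⊢
    rw [rle_replicate_append_s16 (head?_ne_some_of_forall_lt hau),
      rle_replicate_append_s16 (head?_ne_some_of_forall_lt hbv)]
    simp only [length_append, length_replicate] at hlen
    rcases lt_trichotomy a b with hab | rfl | hba
    · exact .rel (.inl hab)
    · rcases lt_trichotomy p q with hpq | rfl | hqp
      · obtain ⟨c, t, rfl⟩ := exists_cons_of_length_pos (show 0 < u₂.length by omega)
        exact absurd h (asymm (lex_replicate_append_of_lt (hau c mem_cons_self) (by omega) _ _))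
      · refine .cons (ih u₂.length ?_ hu₂ hv₂ (by omega) ((lex_append_left_iff _).1 h) rfl)
        rw [← hn, hu_eq, length_append, length_replicate]; omega
      · exact .rel (.inr ⟨rfl, by omega⟩)
    · exact absurd h (asymm (by simpa only [replicate_succ, cons_append] using Lex.rel hba))

/-- correctness of the (untruncated) ERL comparison algorithm.  For
nondecreasing integer sequences `u, v` of equal length, `u < v` lexicographically iff
their run-length encodings compare by the rule "smaller value first; at equal value,
larger count first" at the first differing pair. -/
theorem stmt16 (u v : List ℤ) (hu : u.Pairwise (· ≤ ·)) (hv : v.Pairwise (· ≤ ·))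
    (hlen : u.length = v.length) :
    List.Lex (· < ·) u v ↔ List.Lex rlt (rle u) (rle v) := by
  refine ⟨lex_rle_of_lex hu hv hlen, fun h => by_contra fun hnot => ?_⟩
  have hvu : ¬ Lex (· < ·) v u := fun hvu => asymm h (lex_rle_of_lex hv hu hlen.symm hvu)
  obtain rfl := Std.Trichotomous.trichotomous u v hnot hvu
  exact irrefl _ h
end
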